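/- For any real D ≠ 0, the integral over s in (-t, t) of exp(-D(1/2 + (1/(2πi))·log|(s-t)/(s+t)|)) ds equals 2tD/(e^D - 1). Equivalently, t·e^{-D/2}·∫_{-1}^{1} ((1-u)/(1+u))^{Di/(2π)} du = 2tD/(e^D - 1). -/

import Mathlib

open MeasureTheory intervalIntegral

private lemma subst_aux (t : ℝ) (ht : 0 < t) (g : ℝ → ℂ) :
    ∫ s in (-t)..t, g s = (2*t : ℝ) • ∫ u in (0:ℝ)..1, g (-(2*t) * u + t) := by
  have h2t : -(2*t) ≠ 0 := neg_ne_zero.mpr (by positivity)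
  rw [intervalIntegral.integral_comp_mul_add (a := 0) (b := 1) g h2t t,
    show -(2*t)*0 + t = t by ring, show -(2*t)*1 + t = -t by ring,
    intervalIntegral.integral_symm (-t) t, smul_neg, smul_neg, smul_smul,
    show (2*t) * (-(2*t))⁻¹ = -1 by field_simp, neg_smul, one_smul, neg_neg]

private lemma beta_aux (a : ℝ) (t : ℝ) (ht : 0 < t) :
    (∫ u in (0:ℝ)..1, Complex.exp ((a:ℂ) * Complex.I *
        (Real.log (|((-(2*t) * u + t) - t) / ((-(2*t) * u + t) + t)|) : ℂ)))
      = Complex.betaIntegral (1 + a * Complex.I) (1 - a * Complex.I) := by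
  rw [Complex.betaIntegral]
  apply intervalIntegral.integral_congr_ae
  have h1 : ∀ᵐ u : ℝ, u ≠ 1 := by
    rw [MeasureTheory.ae_iff]
    simpa using MeasureTheory.measure_singleton (1:ℝ)
  filter_upwards [h1] with u hu1 hu
  rw [Set.uIoc_of_le (by norm_num : (0:ℝ) ≤ 1)] at hu
  obtain ⟨h0, h1'⟩ := hu
  have h1lt : u < 1 := lt_of_le_of_ne h1' hu1
  have h1u : (0:ℝ) < 1 - u := by linarith
  have habs : |((-(2*t) * u + t) - t) / ((-(2*t) * u + t) + t)| = u / (1 - u) := by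
    rw [show (-(2*t) * u + t) - t = -(2*t*u) by ring, show (-(2*t) * u + t) + t = 2*t*(1-u) by ring,
      abs_div, abs_neg, abs_of_pos (by positivity), abs_of_pos (by positivity : 0 < 2*t*(1-u))]
    field_simp
  rw [habs, Real.log_div (ne_of_gt h0) (ne_of_gt h1u), add_sub_cancel_left, sub_sub_cancel_left]
  have hu0 : (u:ℂ) ≠ 0 := by exact_mod_cast ne_of_gt h0
  have h1u' : (1:ℂ) - u ≠ 0 := by
    rw [show (1:ℂ) - u = ((1-u : ℝ) : ℂ) by push_cast; ring]
    exact_mod_cast ne_of_gt h1u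
  rw [Complex.cpow_def_of_ne_zero hu0, Complex.cpow_def_of_ne_zero h1u', ← Complex.exp_add,
    ← Complex.ofReal_log h0.le,
    show (1:ℂ) - u = ((1-u : ℝ) : ℂ) by push_cast; ring, ← Complex.ofReal_log h1u.le]
  congr 1
  push_cast
  ring

private lemma beta_value (D : ℝ) (hD : D ≠ 0) (a : ℝ) (ha : a = D / (2*Real.pi)) :
    Complex.betaIntegral (1 + a * Complex.I) (1 - a * Complex.I)
      = ((D/2 : ℝ) : ℂ) / ((Real.sinh (D/2) : ℝ) : ℂ) := by
  have hπ : Real.pi ≠ 0 := Real.pi_ne_zero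
  have haR : a ≠ 0 := by simp [ha, hD, hπ]
  have haI : (a:ℂ) * Complex.I ≠ 0 :=
    mul_ne_zero (by exact_mod_cast haR) Complex.I_ne_zero
  have hre1 : 0 < (1 + (a:ℂ) * Complex.I).re := by simp
  have hre2 : 0 < (1 - (a:ℂ) * Complex.I).re := by simp
  have hG := Complex.Gamma_mul_Gamma_eq_betaIntegral hre1 hre2
  rw [show (1 + (a:ℂ)*Complex.I) + (1 - (a:ℂ)*Complex.I) = 2 by ring,
    show Complex.Gamma 2 = 1 by
      rw [(by norm_num : (2:ℂ) = 1 + 1), Complex.Gamma_add_one _ one_ne_zero,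
        Complex.Gamma_one]; ring,
    one_mul,
    show Complex.Gamma (1 + (a:ℂ)*Complex.I) = (a:ℂ)*Complex.I * Complex.Gamma ((a:ℂ)*Complex.I) by
      rw [add_comm]; exact Complex.Gamma_add_one _ haI,
    mul_assoc,
    Complex.Gamma_mul_Gamma_one_sub] at hG
  rw [← hG]
  have hsin : Complex.sin (↑Real.pi * ((a:ℂ) * Complex.I))
      = ((Real.sinh (D/2) : ℝ) : ℂ) * Complex.I := by
    rw [show (↑Real.pi * ((a:ℂ) * Complex.I)) = ((Real.pi * a : ℝ) : ℂ) * Complex.I by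
      push_cast; ring, Complex.sin_mul_I, Complex.ofReal_sinh,
      show Real.pi * a = D/2 by rw [ha]; field_simp]
  rw [hsin]
  have hsh : ((Real.sinh (D/2) : ℝ) : ℂ) ≠ 0 := by
    exact_mod_cast (by simp [Real.sinh_eq_zero, hD] : Real.sinh (D/2) ≠ 0)
  have h2 : (a : ℂ) * Real.pi = (D : ℂ)/2 := by
    have h : a * Real.pi = D/2 := by rw [ha]; field_simp
    rw [← Complex.ofReal_mul, h]; push_cast; ring
  set S : ℂ := ((Real.sinh (D/2) : ℝ) : ℂ) with hS
  field_simp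
  rw [Complex.ofReal_div, Complex.ofReal_ofNat]
  linear_combination h2

private lemma final_real (t D : ℝ) (ht : 0 < t) (hD : D ≠ 0) :
    Real.exp (-(D/2)) * (2*t * ((D/2)/Real.sinh (D/2))) = 2*t*D/(Real.exp D - 1) := by
  have h1 : Real.sinh (D/2) ≠ 0 := by
    simp [Real.sinh_eq_zero, hD]
  have h2 : Real.exp D - 1 ≠ 0 := by
    have := Real.exp_eq_one_iff (x := D)
    intro h; exact hD (this.mp (by linarith))
  rw [show Real.exp D = Real.exp (D/2) * Real.exp (D/2) by rw [← Real.exp_add]; ring_nf] at h2 ⊢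
  rw [Real.sinh_eq] at h1 ⊢
  rw [Real.exp_neg] at *
  field_simp at *

/-- For `t > 0` and real `D ≠ 0`,
`∫_{-t}^{t} exp(-D(1/2 + (1/(2πi))·log|(s-t)/(s+t)|)) ds = 2tD/(e^D - 1)`. -/
theorem stmt_0 (t D : ℝ) (ht : 0 < t) (hD : D ≠ 0) :
    (∫ s in (-t)..t, Complex.exp (-(D : ℂ) *
        (1 / 2 + (1 / (2 * Real.pi * Complex.I)) *
          (Real.log (|(s - t) / (s + t)|) : ℂ))))
      = (2 * t * D / (Real.exp D - 1) : ℂ) := by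
  have hπ : Real.pi ≠ 0 := Real.pi_ne_zero
  set a : ℝ := D / (2*Real.pi) with ha
  have h1 : ∀ s : ℝ, Complex.exp (-(D : ℂ) *
        (1 / 2 + (1 / (2 * Real.pi * Complex.I)) *
          (Real.log (|(s - t) / (s + t)|) : ℂ)))
      = Complex.exp (-(D:ℂ)/2) *
        Complex.exp ((a:ℂ) * Complex.I * (Real.log (|(s - t) / (s + t)|) : ℂ)) := by
    intro s
    rw [← Complex.exp_add]
    congr 1
    rw [ha]
    push_cast
    have hπC : (Real.pi : ℂ) ≠ 0 := by exact_mod_cast hπ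
    field_simp
    ring_nf
    simp [Complex.I_sq]
    ring
  simp only [h1]
  rw [intervalIntegral.integral_const_mul,
    subst_aux t ht (fun s => Complex.exp ((a:ℂ) * Complex.I * (Real.log (|(s - t) / (s + t)|) : ℂ))),
    beta_aux a t ht, beta_value D hD a ha]
  rw [Complex.real_smul, show -(D:ℂ)/2 = ((-(D/2) : ℝ) : ℂ) by push_cast; ring,
    ← Complex.ofReal_exp]
  have key := final_real t D ht hD
  norm_cast
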